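/- Let q ≥ 2 be an integer and let Γ be a discrete subgroup of the automorphism group of the (q+1)-regular tree T_{q+1} such that the action of Γ on the vertex set of T_{q+1} has only finitely many orbits (i.e., Γ is a uniform lattice). Then the critical exponent of Γ satisfies δ_Γ = log q. -/

import Mathlib

/-!
In the `(q+1)`-regular tree the sphere of radius `n + 1` has `(q+1) qⁿ` vertices, so the ball
`B(v, n)` has between `qⁿ` and `3 qⁿ` vertices when `q ≥ 2`. The fibres of the orbit map
`γ ↦ γ v` are cosets of the finite stabilizer `Γ_v`, so `#{γ | d(v, γ v) ≤ n} ≤ |Γ_v| · |B(v, n)|`.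
Finitely many orbits means every vertex lies within some `D` of the orbit `Γ v`, so the
translates `γ B(v, D)` with `d(v, γ v) ≤ n + D` cover `B(v, n)`, and
`|B(v, n)| ≤ |B(v, D)| · #{γ | d(v, γ v) ≤ n + D}`. The orbit counting function is thus
squeezed between constant multiples of `qⁿ`, and its exponential growth rate is `log q`.
-/

open Filter

/-- The critical exponent of a subgroup `Γ` of the automorphism group of a graph `G`,
with respect to a base vertex `v`. -/
noncomputable def critExp {V : Type*} (G : SimpleGraph V) (Γ : Subgroup (G ≃g G)) (v : V) : ℝ :=
  limsup (fun n : ℕ =>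
    Real.log (({γ : Γ | G.dist v ((γ : G ≃g G) v) ≤ n}).ncard) / n) atTop

/-- `Γ` is a discrete subgroup of `Aut(G)`: every vertex stabilizer is finite. -/
def IsDiscreteSubgroup {V : Type*} (G : SimpleGraph V) (Γ : Subgroup (G ≃g G)) : Prop :=
  ∀ v : V, {γ : Γ | (γ : G ≃g G) v = v}.Finite

open Topology Pointwise

theorem tendsto_log_div_of_pow_le_of_le_pow {N : ℕ → ℕ} {q C K D : ℕ} (hq : 0 < q)
    (hup : ∀ n, N n ≤ C * q ^ n) (hlow : ∀ n, q ^ n ≤ K * N (n + D)) :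
    Tendsto (fun n : ℕ => Real.log (N n) / n) atTop (𝓝 (Real.log q)) := by
  have hKN : ∀ n, 0 < K * N (n + D) := fun n => (pow_pos hq n).trans_le (hlow n)
  have hN : ∀ m, (0 : ℝ) < N (m + D) := fun m => by
    exact_mod_cast pos_of_mul_pos_right (hKN m) (Nat.zero_le _)
  have hK : (0 : ℝ) < K := by exact_mod_cast pos_of_mul_pos_left (hKN 0) (Nat.zero_le _)
  have hC : (0 : ℝ) < C := by
    refine Nat.cast_pos.mpr (Nat.pos_of_ne_zero fun hC => ?_)
    simpa [hC] using (hKN 0).trans_le (Nat.mul_le_mul_left K (hup (0 + D)))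
  have hlim : ∀ c : ℝ, Tendsto (fun n : ℕ => Real.log q + c / n) atTop (𝓝 (Real.log q)) :=
    fun c => by simpa using tendsto_const_nhds.add (tendsto_const_div_atTop_nhds_zero_nat c)
  have hbounds : ∀ᶠ n : ℕ in atTop,
      Real.log q + -(D * Real.log q + Real.log K) / n ≤ Real.log (N n) / n ∧
        Real.log (N n) / n ≤ Real.log q + Real.log C / n := by
    filter_upwards [eventually_gt_atTop D] with n hn
    obtain ⟨m, rfl⟩ : ∃ m, n = m + D := ⟨n - D, by omega⟩
    have hn : (0 : ℝ) < (m + D : ℕ) := by exact_mod_cast (by omega : 0 < m + D)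
    have hlog_low : m * Real.log q ≤ Real.log K + Real.log (N (m + D)) := by
      rw [← Real.log_pow, ← Real.log_mul hK.ne' (hN m).ne']
      exact Real.log_le_log (by positivity) (by exact_mod_cast hlow m)
    have hlog_up : Real.log (N (m + D)) ≤ Real.log C + (m + D : ℕ) * Real.log q := by
      rw [← Real.log_pow, ← Real.log_mul hC.ne' (by positivity)]
      exact Real.log_le_log (hN m) (by exact_mod_cast hup (m + D))
    rw [le_div_iff₀ hn, div_le_iff₀ hn, add_mul, add_mul, div_mul_cancel₀ _ hn.ne',
      div_mul_cancel₀ _ hn.ne']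
    push_cast at hlog_low hlog_up ⊢
    constructor <;> linarith
  exact tendsto_of_tendsto_of_tendsto_of_le_of_le' (hlim _) (hlim _)
    (hbounds.mono fun _ h => h.1) (hbounds.mono fun _ h => h.2)

theorem Set.ncard_biUnion_le_mul {ι α : Type*} {t : Set ι} (ht : t.Finite) {s : ι → Set α} {m : ℕ}
    (hm : ∀ i ∈ t, (s i).ncard ≤ m) : (⋃ i ∈ t, s i).ncard ≤ m * t.ncard := by
  calc (⋃ i ∈ t, s i).ncard = (⋃ i ∈ ht.toFinset, s i).ncard := by simp
  _ ≤ ∑ i ∈ ht.toFinset, (s i).ncard := ht.toFinset.set_ncard_biUnion_le s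
  _ ≤ ∑ _i ∈ ht.toFinset, m := Finset.sum_le_sum fun i hi => hm i (ht.mem_toFinset.mp hi)
  _ = m * t.ncard := by rw [Finset.sum_const, smul_eq_mul, mul_comm, Set.ncard_eq_toFinset_card t ht]

namespace MulAction

variable {H α : Type*} [Group H] [MulAction H α] {a b : α}

theorem setOf_smul_eq_eq_smul_stabilizer {g₀ : H} (h : g₀ • a = b) :
    {g : H | g • a = b} = g₀ • (stabilizer H a : Set H) := by
  ext g
  simp [Set.mem_smul_set_iff_inv_smul_mem, mul_smul, ← h, inv_smul_eq_iff]

theorem ncard_setOf_smul_eq_le (a b : α) :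
    {g : H | g • a = b}.ncard ≤ (stabilizer H a : Set H).ncard := by
  rcases Set.eq_empty_or_nonempty {g : H | g • a = b} with h | ⟨g₀, hg₀⟩
  · simp [h]
  · rw [setOf_smul_eq_eq_smul_stabilizer hg₀, Set.ncard_smul_set]

theorem finite_setOf_smul_eq (hstab : (stabilizer H a : Set H).Finite) (b : α) :
    {g : H | g • a = b}.Finite := by
  rcases Set.eq_empty_or_nonempty {g : H | g • a = b} with h | ⟨g₀, hg₀⟩
  · simp [h]
  · rw [setOf_smul_eq_eq_smul_stabilizer hg₀]
    exact hstab.smul_set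

theorem finite_setOf_smul_mem (hstab : (stabilizer H a : Set H).Finite) {s : Set α}
    (hs : s.Finite) : {g : H | g • a ∈ s}.Finite :=
  hs.preimage' fun b _ => finite_setOf_smul_eq hstab b

theorem ncard_setOf_smul_mem_le {s : Set α} (hs : s.Finite) :
    {g : H | g • a ∈ s}.ncard ≤ (stabilizer H a : Set H).ncard * s.ncard := by
  change ((· • a) ⁻¹' s).ncard ≤ _
  rw [← Set.biUnion_preimage_singleton]
  exact Set.ncard_biUnion_le_mul hs fun b _ => ncard_setOf_smul_eq_le a b

end MulAction

namespace SimpleGraph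

variable {V V' : Type*} {G : SimpleGraph V} {G' : SimpleGraph V'}

theorem Iso.dist_map (e : G ≃g G') (u v : V) : G'.dist (e u) (e v) = G.dist u v := by
  by_cases h : G.Reachable u v
  · apply le_antisymm
    · obtain ⟨p, hp⟩ := h.exists_walk_length_eq_dist
      simpa [hp] using dist_le (p.map e.toHom)
    · obtain ⟨p, hp⟩ := (Iso.reachable_iff.mpr h).exists_walk_length_eq_dist
      simpa [hp] using dist_le (p.map e.symm.toHom : G.Walk (e.symm (e u)) (e.symm (e v)))
  · rw [dist_eq_zero_of_not_reachable h, dist_eq_zero_of_not_reachable (mt Iso.reachable_iff.mp h)]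

def sphere (G : SimpleGraph V) (x : V) (n : ℕ) : Set V := {u | G.dist x u = n}

def closedBall (G : SimpleGraph V) (x : V) (n : ℕ) : Set V := {u | G.dist x u ≤ n}

theorem Iso.image_closedBall (e : G ≃g G') (x : V) (n : ℕ) :
    e '' G.closedBall x n = G'.closedBall (e x) n := by
  ext u
  obtain ⟨w, rfl⟩ := e.surjective u
  simp [closedBall, e.injective.eq_iff, e.dist_map]

theorem Connected.exists_adj_dist_eq_of_dist_eq_add_one (hG : G.Connected) {x u : V} {n : ℕ}
    (h : G.dist x u = n + 1) : ∃ w, G.Adj w u ∧ G.dist x w = n := by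
  obtain ⟨p, hp⟩ := (hG x u).exists_walk_length_eq_dist
  have hnil : ¬ p.Nil := Walk.not_nil_of_ne (fun hxu => by simp [hxu] at h)
  refine ⟨p.penultimate, p.adj_penultimate hnil, le_antisymm ?_ ?_⟩
  · simpa [hp, h] using dist_le p.dropLast
  · have := (p.adj_penultimate hnil).reachable.dist_triangle_right x
    rw [dist_eq_one_iff_adj.mpr (p.adj_penultimate hnil)] at this
    omega

theorem dist_le_of_mem_support {x u w : V} (p : G.Walk x w) (hu : u ∈ p.support) :
    G.dist x u ≤ p.length := by
  classical
  exact (dist_le (p.takeUntil u hu)).trans (p.length_takeUntil_le_length hu)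

theorem IsTree.eq_of_adj_of_dist_add_one_eq (hG : G.IsTree) {x u w₁ w₂ : V}
    (h₁ : G.Adj w₁ u) (h₂ : G.Adj w₂ u)
    (hd₁ : G.dist x w₁ + 1 = G.dist x u) (hd₂ : G.dist x w₂ + 1 = G.dist x u) : w₁ = w₂ := by
  obtain ⟨p, hp, hplen⟩ := hG.connected.exists_path_of_dist x u
  -- a geodesic to such a `w` extends to a path to `u`, which must be `p`
  have key : ∀ w, G.Adj w u → G.dist x w + 1 = G.dist x u → w = p.penultimate := by
    intro w hw hd
    obtain ⟨r, hr, hrlen⟩ := hG.connected.exists_path_of_dist x w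
    have hu : u ∉ r.support := fun hu => by
      have := dist_le_of_mem_support r hu
      omega
    exact hG.isAcyclic.eq_penultimate_of_adj_end hp hw.symm
      (hG.isAcyclic.mem_support_of_ne_mem_support_of_adj_of_isPath hp hr hw.symm hu)
  rw [key w₁ h₁ hd₁, key w₂ h₂ hd₂]

theorem Connected.sphere_zero (hG : G.Connected) (x : V) : G.sphere x 0 = {x} := by
  ext u
  simp [sphere, hG.dist_eq_zero_iff, eq_comm]

theorem Connected.sphere_succ_eq_biUnion (hG : G.Connected) (x : V) (n : ℕ) :
    G.sphere x (n + 1) = ⋃ w ∈ G.sphere x n, G.neighborSet w ∩ G.sphere x (n + 1) := by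
  ext u
  simp only [Set.mem_iUnion, Set.mem_inter_iff, mem_neighborSet, exists_prop]
  refine ⟨fun hu => ?_, fun ⟨_, _, _, hu⟩ => hu⟩
  obtain ⟨w, hwu, hw⟩ := hG.exists_adj_dist_eq_of_dist_eq_add_one hu
  exact ⟨w, hw, hwu, hu⟩

theorem Connected.sphere_finite (hG : G.Connected) (hfin : ∀ v, (G.neighborSet v).Finite)
    (x : V) (n : ℕ) : (G.sphere x n).Finite := by
  induction n with
  | zero => simp [hG.sphere_zero]
  | succ n ih =>
    rw [hG.sphere_succ_eq_biUnion]
    exact ih.biUnion fun w _ => (hfin w).inter_of_left _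

theorem Connected.closedBall_zero (hG : G.Connected) (x : V) : G.closedBall x 0 = {x} := by
  ext u
  simp [closedBall, hG.dist_eq_zero_iff, eq_comm]

theorem closedBall_succ (x : V) (n : ℕ) :
    G.closedBall x (n + 1) = G.closedBall x n ∪ G.sphere x (n + 1) := by
  ext u
  simp [closedBall, sphere, Nat.le_succ_iff]

theorem Connected.closedBall_finite (hG : G.Connected) (hfin : ∀ v, (G.neighborSet v).Finite)
    (x : V) (n : ℕ) : (G.closedBall x n).Finite := by
  induction n with
  | zero => simp [hG.closedBall_zero]
  | succ n ih => simpa [closedBall_succ] using ⟨ih, hG.sphere_finite hfin x (n + 1)⟩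

theorem IsTree.pairwiseDisjoint_neighborSet_inter_sphere (hG : G.IsTree) (x : V) (n : ℕ) :
    (G.sphere x n).PairwiseDisjoint fun w => G.neighborSet w ∩ G.sphere x (n + 1) := by
  intro w₁ hw₁ w₂ hw₂ hne
  refine Set.disjoint_left.mpr fun u ⟨hu₁, hu⟩ ⟨hu₂, _⟩ => hne ?_
  exact hG.eq_of_adj_of_dist_add_one_eq hu₁ hu₂ (by rw [hw₁, hu]) (by rw [hw₂, hu])

theorem IsTree.insert_neighborSet_inter_sphere (hG : G.IsTree) {x w p : V} {n : ℕ}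
    (hp : G.Adj p w) (hpd : G.dist x p = n) (hw : G.dist x w = n + 1) :
    insert p (G.neighborSet w ∩ G.sphere x (n + 2)) = G.neighborSet w := by
  ext u
  simp only [Set.mem_insert_iff, Set.mem_inter_iff, mem_neighborSet, sphere, Set.mem_ofPred_eq]
  constructor
  · rintro (rfl | ⟨hu, _⟩)
    exacts [hp.symm, hu]
  · intro hu
    rcases hG.dist_eq_dist_add_one_of_adj x hu with h | h
    · exact Or.inl (hG.eq_of_adj_of_dist_add_one_eq (x := x) hu.symm hp (by omega) (by omega))
    · exact Or.inr ⟨hu, by omega⟩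

theorem finite_neighborSet_of_ncard_eq_succ {q : ℕ}
    (hreg : ∀ v, (G.neighborSet v).ncard = q + 1) (v : V) : (G.neighborSet v).Finite :=
  Set.finite_of_ncard_ne_zero (by simp [hreg])

section Regular

variable {q : ℕ} (hG : G.IsTree) (hreg : ∀ v, (G.neighborSet v).ncard = q + 1)
include hG hreg

theorem IsTree.ncard_neighborSet_inter_sphere {x w : V} {n : ℕ} (hw : w ∈ G.sphere x n) :
    (G.neighborSet w ∩ G.sphere x (n + 1)).ncard = if n = 0 then q + 1 else q := by
  cases n with
  | zero =>
    obtain rfl : w = x := by simpa [hG.connected.sphere_zero] using hw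
    have : G.neighborSet w ∩ G.sphere w 1 = G.neighborSet w :=
      Set.inter_eq_left.mpr fun u hu => dist_eq_one_iff_adj.mpr hu
    simp [this, hreg]
  | succ n =>
    obtain ⟨p, hp, hpd⟩ := hG.connected.exists_adj_dist_eq_of_dist_eq_add_one hw
    have hpn : p ∉ G.neighborSet w ∩ G.sphere x (n + 2) := fun h => by
      have : G.dist x p = n + 2 := h.2
      omega
    have := Set.ncard_insert_of_notMem hpn
      ((finite_neighborSet_of_ncard_eq_succ hreg w).inter_of_left _)
    rw [hG.insert_neighborSet_inter_sphere hp hpd hw, hreg] at this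
    rw [if_neg n.succ_ne_zero]
    exact (Nat.add_right_cancel this).symm

theorem IsTree.ncard_sphere_succ (x : V) (n : ℕ) :
    (G.sphere x (n + 1)).ncard = (q + 1) * q ^ n := by
  have hfin := finite_neighborSet_of_ncard_eq_succ hreg
  have step : ∀ n, (G.sphere x (n + 1)).ncard =
      (if n = 0 then q + 1 else q) * (G.sphere x n).ncard := fun n => by
    rw [hG.connected.sphere_succ_eq_biUnion, (hG.connected.sphere_finite hfin x n).ncard_biUnion
      (fun w _ => (hfin w).inter_of_left _) (hG.pairwiseDisjoint_neighborSet_inter_sphere x n),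
      finsum_mem_congr rfl fun w hw => hG.ncard_neighborSet_inter_sphere hreg hw,
      ← finsum_one, ← smul_eq_mul, smul_finsum_mem (hG.connected.sphere_finite hfin x n)]
    simp
  induction n with
  | zero => simp [step 0, hG.connected.sphere_zero]
  | succ n ih => rw [step, ih, if_neg n.succ_ne_zero]; ring

theorem IsTree.ncard_closedBall (x : V) (n : ℕ) :
    ((q : ℤ) - 1) * (G.closedBall x n).ncard + 2 = (q + 1) * q ^ n := by
  have hfin := finite_neighborSet_of_ncard_eq_succ hreg
  induction n with
  | zero => simp [hG.connected.closedBall_zero]; ring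
  | succ n ih =>
    have hdisj : Disjoint (G.closedBall x n) (G.sphere x (n + 1)) :=
      Set.disjoint_left.mpr fun u (hu : _ ≤ n) (hu' : _ = n + 1) => by omega
    rw [closedBall_succ, Set.ncard_union_eq hdisj (hG.connected.closedBall_finite hfin x n)
      (hG.connected.sphere_finite hfin x (n + 1)), hG.ncard_sphere_succ hreg]
    push_cast
    linear_combination ih

theorem IsTree.pow_le_ncard_closedBall (hq : 2 ≤ q) (x : V) (n : ℕ) :
    q ^ n ≤ (G.closedBall x n).ncard := by
  have h := hG.ncard_closedBall hreg x n
  have : (2 : ℤ) ≤ q := by exact_mod_cast hq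
  have : (1 : ℤ) ≤ (q : ℤ) ^ n := one_le_pow₀ (by omega)
  suffices ((q : ℤ) ^ n) ≤ (G.closedBall x n).ncard by exact_mod_cast this
  nlinarith

theorem IsTree.ncard_closedBall_le (hq : 2 ≤ q) (x : V) (n : ℕ) :
    (G.closedBall x n).ncard ≤ 3 * q ^ n := by
  have h := hG.ncard_closedBall hreg x n
  have : (2 : ℤ) ≤ q := by exact_mod_cast hq
  have : (0 : ℤ) ≤ (q : ℤ) ^ n := by positivity
  suffices ((G.closedBall x n).ncard : ℤ) ≤ 3 * q ^ n by exact_mod_cast this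
  nlinarith

end Regular

section Automorphisms

variable {Γ : Subgroup (G ≃g G)}

theorem exists_forall_dist_le_of_finite_orbits
    (hcofinite : ∃ s : Finset V, ∀ u : V, ∃ w ∈ s, ∃ γ : Γ, (γ : G ≃g G) w = u) (v : V) :
    ∃ D, ∀ u, ∃ γ : Γ, G.dist u ((γ : G ≃g G) v) ≤ D := by
  obtain ⟨s, hs⟩ := hcofinite
  refine ⟨s.sup (G.dist · v), fun u => ?_⟩
  obtain ⟨w, hw, γ, rfl⟩ := hs u
  exact ⟨γ, (Iso.dist_map _ w v).trans_le (Finset.le_sup (f := (G.dist · v)) hw)⟩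

theorem Connected.ncard_closedBall_le_mul (hG : G.Connected) {v : V} {D : ℕ}
    (hD : ∀ u, ∃ γ : Γ, G.dist u ((γ : G ≃g G) v) ≤ D) (hball : (G.closedBall v D).Finite)
    (n : ℕ) (hfin : {γ : Γ | G.dist v ((γ : G ≃g G) v) ≤ n + D}.Finite) :
    (G.closedBall v n).ncard ≤
      (G.closedBall v D).ncard * {γ : Γ | G.dist v ((γ : G ≃g G) v) ≤ n + D}.ncard := by
  have hcover : G.closedBall v n ⊆
      ⋃ γ ∈ {γ : Γ | G.dist v ((γ : G ≃g G) v) ≤ n + D}, (γ : G ≃g G) '' G.closedBall v D := by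
    intro u (hu : G.dist v u ≤ n)
    obtain ⟨γ, hγ⟩ := hD u
    refine Set.mem_biUnion (x := γ) ?_ ?_
    · exact hG.dist_triangle.trans (Nat.add_le_add hu hγ)
    · rw [Iso.image_closedBall]
      exact (dist_comm (G := G)).trans_le hγ
  refine (Set.ncard_le_ncard hcover (hfin.biUnion fun γ _ => hball.image _)).trans ?_
  exact Set.ncard_biUnion_le_mul hfin fun γ _ =>
    (Set.ncard_image_of_injective _ (γ : G ≃g G).injective).le

end Automorphisms

end SimpleGraph

/-- If a discrete subgroup `Γ` of the automorphism group of the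
`(q+1)`-regular tree has only finitely many vertex orbits (i.e. `Γ` is a uniform
lattice), then its critical exponent equals `log q`. -/
theorem critExp_eq_log_of_uniform_lattice
    (q : ℕ) (hq : 2 ≤ q)
    (V : Type) (G : SimpleGraph V) (htree : G.IsTree)
    (hreg : ∀ v : V, (G.neighborSet v).ncard = q + 1)
    (Γ : Subgroup (G ≃g G)) (hdisc : IsDiscreteSubgroup G Γ)
    (hcofinite : ∃ s : Finset V, ∀ v : V, ∃ w ∈ s, ∃ γ : Γ, (γ : G ≃g G) w = v)
    (v : V) :
    critExp G Γ v = Real.log q := by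
  have hfin : ∀ n, (G.closedBall v n).Finite :=
    htree.connected.closedBall_finite (SimpleGraph.finite_neighborSet_of_ncard_eq_succ hreg) v
  obtain ⟨D, hD⟩ := SimpleGraph.exists_forall_dist_le_of_finite_orbits hcofinite v
  have hup : ∀ n, {γ : Γ | G.dist v ((γ : G ≃g G) v) ≤ n}.ncard ≤
      (MulAction.stabilizer Γ v : Set Γ).ncard * 3 * q ^ n := fun n => by
    rw [mul_assoc]
    exact (MulAction.ncard_setOf_smul_mem_le (hfin n)).trans
      (Nat.mul_le_mul_left _ (htree.ncard_closedBall_le hreg hq v n))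
  have hlow : ∀ n, q ^ n ≤
      (G.closedBall v D).ncard * {γ : Γ | G.dist v ((γ : G ≃g G) v) ≤ n + D}.ncard := fun n =>
    (htree.pow_le_ncard_closedBall hreg hq v n).trans (htree.connected.ncard_closedBall_le_mul hD
      (hfin D) n (MulAction.finite_setOf_smul_mem (hdisc v) (hfin (n + D))))
  exact (tendsto_log_div_of_pow_le_of_le_pow (by omega) hup hlow).limsup_eq
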